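/- arXiv:math/0401013 — 7 statements merged into one kernel-verified Lean document; each statement's English description precedes it below -/
import Mathlib

section
/- Let p be a prime and q a positive integer, and let a, b be integers with gcd(a, q) = gcd(b, q) = d. Then the number of solutions x modulo q of a·x ≡ b (mod q) with gcd(x, q) = 1 equals φ(q)/φ(q/d). In particular this number is always between 1 and d. -/
/-!
Put `m = q / d`. Dividing by `d` turns `a x ≡ b [MOD q]` into `(a/d) x ≡ b/d [MOD m]` with
`a/d`, `b/d` units mod `m`, so the solutions coprime to `q` form one fibre of the surjective
reduction `(ZMod q)ˣ → (ZMod m)ˣ`; it has `φ q / φ m` elements and is nonempty. It also lies in a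
fibre of the additive reduction `ZMod q → ZMod m`, which has `q / m = d` elements.
-/

open Finset Function

namespace MonoidHom

@[to_additive]
theorem card_fiber_of_surjective {G H : Type*} [Group G] [Group H] [Fintype G] [Fintype H]
    [DecidableEq H] {f : G →* H} (hf : Surjective f) (y : H) :
    #{g | f g = y} = Fintype.card G / Fintype.card H := by
  have hfib : #{g | f g = y} = Nat.card f.ker := by
    rw [← Nat.card_congr (f.fiberEquivKerOfSurjective hf y), ← Nat.card_eq_finsetCard]
    exact Nat.card_congr (Equiv.subtypeEquivRight fun g => by simp)
  rw [hfib, ← Nat.card_eq_fintype_card, ← Nat.card_eq_fintype_card, ← f.ker.card_mul_index,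
    Subgroup.index_ker f, range_eq_top.mpr hf, Subgroup.card_top,
    Nat.mul_div_cancel _ Nat.card_pos]

end MonoidHom

theorem Nat.mul_modEq_iff_div_mul_modEq {a b q d x : ℕ} (hd : d ≠ 0) (ha : d ∣ a) (hb : d ∣ b)
    (hq : d ∣ q) : a * x ≡ b [MOD q] ↔ a / d * x ≡ b / d [MOD q / d] := by
  obtain ⟨a, rfl⟩ := ha
  obtain ⟨b, rfl⟩ := hb
  obtain ⟨q, rfl⟩ := hq
  simp only [Nat.mul_div_cancel_left _ (Nat.pos_of_ne_zero hd), mul_assoc]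
  exact Nat.ModEq.mul_left_cancel_iff' hd

namespace ZMod

theorem card_filter_coprime_eq_card_filter_units (q : ℕ) [NeZero q] (P : ZMod q → Prop)
    [DecidablePred P] :
    #{x ∈ range q | Nat.gcd x q = 1 ∧ P (x : ZMod q)} = #{u : (ZMod q)ˣ | P u} := by
  refine card_bij' (fun x hx => unitOfCoprime x (mem_filter.mp hx).2.1)
    (fun u _ => (u : ZMod q).val) ?_ ?_ ?_ ?_
  · intro x hx
    simpa [coe_unitOfCoprime] using (mem_filter.mp hx).2.2
  · intro u hu
    simpa [val_lt, val_coe_unit_coprime u] using hu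
  · intro x hx
    simpa [coe_unitOfCoprime] using val_natCast_of_lt (mem_range.mp (mem_filter.mp hx).1)
  · intro u _
    ext
    simp [coe_unitOfCoprime]

variable {q m : ℕ} (hm : m ∣ q)

theorem card_fiber_unitsMap [NeZero q] (y : (ZMod m)ˣ) :
    #{u | unitsMap hm u = y} = q.totient / m.totient := by
  have : NeZero m := .of_pos (Nat.pos_of_dvd_of_pos hm (NeZero.pos q))
  rw [MonoidHom.card_fiber_of_surjective (unitsMap_surjective hm), card_units_eq_totient,
    card_units_eq_totient]

theorem card_fiber_unitsMap_le [NeZero q] (y : (ZMod m)ˣ) :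
    #{u | unitsMap hm u = y} ≤ q / m := by
  have : NeZero m := .of_pos (Nat.pos_of_dvd_of_pos hm (NeZero.pos q))
  calc #{u | unitsMap hm u = y}
      ≤ #{z | (castHom hm (ZMod m)).toAddMonoidHom z = y} := by
        refine card_le_card_of_injOn Units.val ?_ Units.val_injective.injOn
        intro u hu
        simp only [coe_filter, Set.mem_ofPred_eq, mem_univ, true_and] at hu ⊢
        rw [← hu]
        rfl
    _ = q / m := by
        rw [AddMonoidHom.card_fiber_of_surjective (castHom_surjective hm), card, card]

theorem natCast_mul_cast_eq_iff_unitsMap_eq {A B : ℕ} (hA : A.Coprime m) (hB : B.Coprime m)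
    (u : (ZMod q)ˣ) : (A : ZMod m) * (u : ZMod q).cast = B ↔
      unitsMap hm u = (unitOfCoprime A hA)⁻¹ * unitOfCoprime B hB := by
  rw [eq_inv_mul_iff_mul_eq, Units.ext_iff, Units.val_mul, coe_unitOfCoprime, coe_unitOfCoprime,
    unitsMap_def, Units.coe_map]
  rfl

end ZMod

open ZMod in
/-- If `gcd(a,q) = gcd(b,q) = d` then the number of solutions `x` mod `q`
of `a·x ≡ b (mod q)` with `gcd(x,q) = 1` is `φ(q)/φ(q/d)`, which lies between `1` and `d`. -/
theorem stmt_2 (q : ℕ) (hq : 0 < q) (a b d : ℕ) (ha : Nat.gcd a q = d)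
    (hb : Nat.gcd b q = d) :
    ((Finset.range q).filter fun x => Nat.gcd x q = 1 ∧ a * x ≡ b [MOD q]).card =
        q.totient / (q / d).totient ∧
      1 ≤ ((Finset.range q).filter fun x => Nat.gcd x q = 1 ∧ a * x ≡ b [MOD q]).card ∧
      ((Finset.range q).filter fun x => Nat.gcd x q = 1 ∧ a * x ≡ b [MOD q]).card ≤ d := by
  have : NeZero q := ⟨hq.ne'⟩
  have hd : 0 < d := ha ▸ Nat.gcd_pos_of_pos_right a hq
  have hdq : d ∣ q := ha ▸ Nat.gcd_dvd_right a q
  have hm : q / d ∣ q := Nat.div_dvd_of_dvd hdq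
  have hA : (a / d).Coprime (q / d) := by
    rw [← ha]; exact Nat.coprime_div_gcd_div_gcd (ha ▸ hd)
  have hB : (b / d).Coprime (q / d) := by
    rw [← hb]; exact Nat.coprime_div_gcd_div_gcd (hb ▸ hd)
  set y := (unitOfCoprime _ hA)⁻¹ * unitOfCoprime _ hB
  have hsol :
      #{x ∈ range q | Nat.gcd x q = 1 ∧ a * x ≡ b [MOD q]} = #{u | unitsMap hm u = y} := by
    calc _ = #{x ∈ range q | Nat.gcd x q = 1 ∧
          ((a / d : ℕ) : ZMod (q / d)) * ((x : ZMod q).cast) = (b / d : ℕ)} := by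
          refine congrArg card (filter_congr fun x _ => and_congr_right fun _ => ?_)
          rw [Nat.mul_modEq_iff_div_mul_modEq hd.ne' (ha ▸ Nat.gcd_dvd_left a q)
            (hb ▸ Nat.gcd_dvd_left b q) hdq, ← natCast_eq_natCast_iff, cast_natCast hm,
            Nat.cast_mul]
      _ = #{u : (ZMod q)ˣ | ((a / d : ℕ) : ZMod (q / d)) * (u : ZMod q).cast = (b / d : ℕ)} :=
          card_filter_coprime_eq_card_filter_units q
            (fun z : ZMod q => ((a / d : ℕ) : ZMod (q / d)) * z.cast = (b / d : ℕ))
      _ = #{u | unitsMap hm u = y} := by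
          simp only [natCast_mul_cast_eq_iff_unitsMap_eq hm hA hB, y]
  refine ⟨hsol.trans (card_fiber_unitsMap hm y), ?_, ?_⟩
  · obtain ⟨u, hu⟩ := unitsMap_surjective hm y
    exact hsol ▸ card_pos.mpr ⟨u, by simpa using hu⟩
  · calc _ ≤ q / (q / d) := hsol ▸ card_fiber_unitsMap_le hm y
      _ = d := Nat.div_div_self hdq hq.ne'
end

section
/- Let p be a prime and k a divisor of p-1. Then the number of integers h with 1 ≤ h ≤ p-1, gcd(h, p-1) = (p-1)/k, and h a ((p-1)/k)-th power residue modulo p, equals the number of j with 1 ≤ j ≤ k, gcd(j,k) = 1, and (-j)^k ≡ k^k (mod p). -/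
open scoped Classical

/-- `T e p` is the number of `h ∈ {1,…,p-1}` with `gcd(h, p-1) = e` which are `e`-th
power residues mod `p`. -/
noncomputable def T (e p : ℕ) : ℕ :=
  ((Finset.Icc 1 (p - 1)).filter fun h =>
    Nat.gcd h (p - 1) = e ∧ ∃ y : ZMod p, (h : ZMod p) = y ^ e).card

lemma units_crit (p : ℕ) (hp : p.Prime) {e k : ℕ} (hek : e * k = p - 1)
    (x : (ZMod p)ˣ) : (∃ y : (ZMod p)ˣ, y ^ e = x) ↔ x ^ k = 1 := by
  haveI : Fact p.Prime := ⟨hp⟩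
  have hcard : Nat.card (ZMod p)ˣ = p - 1 := by
    rw [Nat.card_eq_fintype_card, ZMod.card_units_eq_totient, Nat.totient_prime hp]
  have hk0 : 0 < k := by
    rcases Nat.eq_zero_or_pos k with h | h
    · exfalso; rw [h, mul_zero] at hek
      have := hp.two_le; omega
    · exact h
  constructor
  · rintro ⟨y, rfl⟩
    rw [← pow_mul, hek, ← hcard, pow_card_eq_one']
  · intro hx
    obtain ⟨g, hg⟩ := IsCyclic.exists_generator (α := (ZMod p)ˣ)
    obtain ⟨m, hm⟩ : x ∈ Submonoid.powers g := mem_powers_iff_mem_zpowers.2 (hg x)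
    simp only at hm
    have hog : orderOf g = p - 1 := by
      rw [orderOf_eq_card_of_forall_mem_zpowers hg, hcard]
    have hdvd : (p - 1) ∣ m * k := by
      rw [← hog]
      apply orderOf_dvd_of_pow_eq_one
      rw [pow_mul, hm, hx]
    rw [← hek] at hdvd
    have hem : e ∣ m := Nat.dvd_of_mul_dvd_mul_right hk0 hdvd
    exact ⟨g ^ (m / e), by rw [← pow_mul, Nat.div_mul_cancel hem, hm]⟩

lemma zmod_crit (p : ℕ) (hp : p.Prime) {e k : ℕ} (he : 0 < e) (hek : e * k = p - 1)
    {x : ZMod p} (hx : x ≠ 0) : (∃ y : ZMod p, x = y ^ e) ↔ x ^ k = 1 := by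
  haveI : Fact p.Prime := ⟨hp⟩
  constructor
  · rintro ⟨y, rfl⟩
    have hy : y ≠ 0 := fun h => hx (by rw [h, zero_pow he.ne'])
    rw [← pow_mul, hek, ZMod.pow_card_sub_one_eq_one hy]
  · intro h
    obtain ⟨u, hu⟩ := (isUnit_iff_ne_zero.mpr hx)
    have hu1 : u ^ k = 1 := by
      ext; rw [Units.val_pow_eq_pow_val, hu, h, Units.val_one]
    obtain ⟨v, hv⟩ := (units_crit p hp hek u).2 hu1
    exact ⟨v, by rw [← hu, ← hv, Units.val_pow_eq_pow_val]⟩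

/-- `T((p-1)/k, p) = #{1 ≤ j ≤ k : gcd(j,k) = 1, (-j)^k ≡ k^k (mod p)}`. -/
theorem stmt_3 (p k : ℕ) (hp : p.Prime) (hk : k ∣ p - 1) :
    T ((p - 1) / k) p =
      ((Finset.Icc 1 k).filter fun j =>
        Nat.gcd j k = 1 ∧ (-(j : ZMod p)) ^ k = (k : ZMod p) ^ k).card := by
  haveI : Fact p.Prime := ⟨hp⟩
  have hp2 : 2 ≤ p := hp.two_le
  have hn1 : 1 ≤ p - 1 := by omega
  set e := (p - 1) / k with hedef
  have hk0 : 0 < k := Nat.pos_of_dvd_of_pos hk (by omega)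
  have hek : e * k = p - 1 := Nat.div_mul_cancel hk
  have he0 : 0 < e := Nat.div_pos (Nat.le_of_dvd (by omega) hk) hk0
  have hkp : k < p := by
    have := Nat.le_of_dvd (by omega : 0 < p - 1) hk
    omega
  have hKne : (k : ZMod p) ≠ 0 := by
    rw [Ne, ZMod.natCast_eq_zero_iff]
    exact fun hd => absurd (Nat.le_of_dvd hk0 hd) (by omega)
  have hEK : (e : ZMod p) * (k : ZMod p) = -1 := by
    have : ((e * k : ℕ) : ZMod p) = ((p - 1 : ℕ) : ZMod p) := by rw [hek]
    rw [Nat.cast_mul, Nat.cast_sub (by omega : 1 ≤ p), ZMod.natCast_self] at this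
    simpa using this
  -- key equivalence for 1 ≤ m ≤ k
  have key : ∀ m : ℕ, 1 ≤ m → m ≤ k →
      ((∃ y : ZMod p, ((e * m : ℕ) : ZMod p) = y ^ e) ↔
        (-(m : ZMod p)) ^ k = (k : ZMod p) ^ k) := by
    intro m hm1 hmk
    have hemp : e * m < p := by
      have : e * m ≤ e * k := Nat.mul_le_mul_left e hmk
      omega
    have hem0 : 0 < e * m := Nat.mul_pos he0 hm1
    have hne : ((e * m : ℕ) : ZMod p) ≠ 0 := by
      rw [Ne, ZMod.natCast_eq_zero_iff]
      exact fun hd => absurd (Nat.le_of_dvd hem0 hd) (by omega)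
    rw [zmod_crit p hp he0 hek hne]
    have hKk : (k : ZMod p) ^ k ≠ 0 := pow_ne_zero _ hKne
    constructor
    · intro h1
      have : ((e * m : ℕ) : ZMod p) ^ k * (k : ZMod p) ^ k = (k : ZMod p) ^ k := by
        rw [h1, one_mul]
      calc (-(m : ZMod p)) ^ k = (((e : ZMod p) * (k : ZMod p)) * (m : ZMod p)) ^ k := by
            rw [hEK]; ring
        _ = ((e * m : ℕ) : ZMod p) ^ k * (k : ZMod p) ^ k := by
            push_cast; ring
        _ = (k : ZMod p) ^ k := this
    · intro h1
      have h2 : ((e * m : ℕ) : ZMod p) ^ k * (k : ZMod p) ^ k = (k : ZMod p) ^ k := by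
        calc ((e * m : ℕ) : ZMod p) ^ k * (k : ZMod p) ^ k
            = (((e : ZMod p) * (k : ZMod p)) * (m : ZMod p)) ^ k := by
              push_cast; ring
          _ = (-(m : ZMod p)) ^ k := by rw [hEK]; ring
          _ = (k : ZMod p) ^ k := h1
      have := mul_right_cancel₀ hKk (h2.trans (one_mul _).symm)
      exact this
  unfold T
  refine Finset.card_bij' (fun h _ => h / e) (fun j _ => e * j) ?_ ?_ ?_ ?_
  · intro h hh
    simp only [Finset.mem_filter, Finset.mem_Icc] at hh ⊢
    obtain ⟨⟨hh1, hh2⟩, hgcd, hres⟩ := hh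
    have heh : e ∣ h := hgcd ▸ Nat.gcd_dvd_left h (p - 1)
    obtain ⟨m, rfl⟩ := heh
    rw [Nat.mul_div_cancel_left m he0]
    have hm1 : 1 ≤ m := Nat.pos_of_ne_zero (by rintro rfl; simp at hh1)
    have hmk : m ≤ k := by
      rw [← hek] at hh2
      exact Nat.le_of_mul_le_mul_left hh2 he0
    have hgcd' : Nat.gcd m k = 1 := by
      have h2 : e * Nat.gcd m k = e * 1 := by
        rw [← Nat.gcd_mul_left, hek, hgcd, mul_one]
      exact Nat.eq_of_mul_eq_mul_left he0 h2
    refine ⟨⟨hm1, hmk⟩, hgcd', (key m hm1 hmk).1 ?_⟩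
    exact_mod_cast hres
  · intro j hj
    simp only [Finset.mem_filter, Finset.mem_Icc] at hj ⊢
    obtain ⟨⟨hj1, hjk⟩, hgcd, hcond⟩ := hj
    have hm1 : 1 ≤ e * j := Nat.mul_pos he0 hj1
    have hm2 : e * j ≤ p - 1 := by
      have : e * j ≤ e * k := Nat.mul_le_mul_left e hjk
      omega
    refine ⟨⟨hm1, hm2⟩, ?_, ?_⟩
    · rw [← hek, Nat.gcd_mul_left, hgcd, mul_one]
    · have := (key j hj1 hjk).2 hcond
      exact_mod_cast this
  · intro h hh
    simp only [Finset.mem_filter, Finset.mem_Icc] at hh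
    obtain ⟨_, hgcd, _⟩ := hh
    have heh : e ∣ h := hgcd ▸ Nat.gcd_dvd_left h (p - 1)
    exact Nat.mul_div_cancel' heh
  · intro j _
    exact Nat.mul_div_cancel_left j he0
end

section
/- Let p be a prime. Then φ(p-1) ≤ Σ_{e | p-1} e · T(e,p) ≤ Σ_{e | p-1} e · φ((p-1)/e) ≤ (p-1) · d(p-1), where d(n) is the number of divisors of n. -/
open scoped Classical

/-!
The gcd condition alone is satisfied by exactly `φ((p-1)/e)` of the `h`, namely `h = e k` with
`k` coprime to `(p-1)/e`; this bounds `T(e,p)`, with equality for `e = 1`, where being a first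
power residue is no condition.
-/

open Finset Nat

theorem Nat.card_filter_Icc_gcd_eq {n e : ℕ} (he : e ∣ n) :
    #{h ∈ Icc 1 n | h.gcd n = e} = φ (n / e) := by
  have hperiodic : Function.Periodic (fun k => n.gcd k = e) n :=
    (periodic_gcd n).comp (· = e)
  rw [totient_div_of_dvd he, ← count_eq_card_filter_range,
    ← filter_Ico_card_eq_of_periodic 1 n _ hperiodic, add_comm, Ico_add_one_right_eq_Icc]
  simp_rw [Nat.gcd_comm n]

theorem Nat.sum_divisors_mul_totient_div_le (n : ℕ) :
    ∑ e ∈ n.divisors, e * φ (n / e) ≤ n * #n.divisors := by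
  calc ∑ e ∈ n.divisors, e * φ (n / e)
      ≤ ∑ e ∈ n.divisors, e * (n / e) :=
        sum_le_sum fun e _ => Nat.mul_le_mul_left e (totient_le _)
    _ = ∑ _e ∈ n.divisors, n :=
        sum_congr rfl fun e he => Nat.mul_div_cancel' (dvd_of_mem_divisors he)
    _ = n * #n.divisors := by rw [sum_const, smul_eq_mul, mul_comm]

theorem T_le_totient {e : ℕ} (p : ℕ) (he : e ∣ p - 1) : T e p ≤ φ ((p - 1) / e) := by
  rw [T, ← card_filter_Icc_gcd_eq he]
  exact card_le_card (monotone_filter_right _ fun _ _ h => h.1)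

theorem T_one (p : ℕ) : T 1 p = φ (p - 1) := by
  simpa [T] using card_filter_Icc_gcd_eq (one_dvd (p - 1))

theorem stmt_7_general (p : ℕ) :
    Nat.totient (p - 1) ≤ ∑ e ∈ (p - 1).divisors, e * T e p ∧
      (∑ e ∈ (p - 1).divisors, e * T e p) ≤
        ∑ e ∈ (p - 1).divisors, e * Nat.totient ((p - 1) / e) ∧
      (∑ e ∈ (p - 1).divisors, e * Nat.totient ((p - 1) / e)) ≤
        (p - 1) * (p - 1).divisors.card := by
  refine ⟨?_, sum_le_sum fun e he =>
    Nat.mul_le_mul_left e (T_le_totient p (dvd_of_mem_divisors he)),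
    sum_divisors_mul_totient_div_le _⟩
  rcases eq_or_ne (p - 1) 0 with hp | hp
  · simp [hp]
  calc φ (p - 1) = 1 * T 1 p := by rw [one_mul, T_one]
    _ ≤ ∑ e ∈ (p - 1).divisors, e * T e p :=
      single_le_sum (f := fun e => e * T e p) (fun _ _ => Nat.zero_le _) (one_mem_divisors.2 hp)

/-- `φ(p-1) ≤ ∑_{e ∣ p-1} e·T(e,p) ≤ ∑_{e ∣ p-1} e·φ((p-1)/e) ≤ (p-1)·d(p-1)`. -/
theorem stmt_7 (p : ℕ) (hp : p.Prime) :
    Nat.totient (p - 1) ≤ ∑ e ∈ (p - 1).divisors, e * T e p ∧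
      (∑ e ∈ (p - 1).divisors, e * T e p) ≤
        ∑ e ∈ (p - 1).divisors, e * Nat.totient ((p - 1) / e) ∧
      (∑ e ∈ (p - 1).divisors, e * Nat.totient ((p - 1) / e)) ≤
        (p - 1) * (p - 1).divisors.card :=
  stmt_7_general p
end

section
/- Let p be a prime and h an integer with 1 ≤ h ≤ p-1 and gcd(h, p-1) = 1. Then there is exactly one g with 1 ≤ g ≤ p-1 satisfying g^h ≡ h (mod p), namely g ≡ h^{h̄} (mod p) where h̄ is the inverse of h modulo p-1. Consequently the number of pairs (g,h) with g^h ≡ h (mod p) and gcd(h,p-1)=1 equals φ(p-1). -/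
/-!
Since `x ↦ x ^ h` and `y ↦ y ^ h̄` are mutually inverse on `(ZMod p)ˣ` (Fermat's little theorem
and `h * h̄ ≡ 1 (mod p - 1)`), the equation `g ^ h = h` has the single nonzero solution `g = h ^ h̄`,
and `h ≠ 0` rules out `g = 0`. Summing one solution over the `φ(p - 1)` exponents `h` coprime to
`p - 1` counts the pairs.
-/

section

open Finset

theorem FiniteField.pow_eq_iff_eq_pow {K : Type*} [GroupWithZero K] [Fintype K] {e e' : ℕ}
    (he : e ≠ 0) (hinv : e * e' ≡ 1 [MOD Fintype.card K - 1]) {c : K} (hc : c ≠ 0) (x : K) :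
    x ^ e = c ↔ x = c ^ e' := by
  constructor
  · rintro rfl
    have hx : x ≠ 0 := by
      rintro rfl
      exact hc (zero_pow he)
    rw [← pow_mul, pow_eq_pow_of_modEq hinv (pow_card_sub_one_eq_one x hx), pow_one]
  · rintro rfl
    rw [← pow_mul, mul_comm, pow_eq_pow_of_modEq hinv (pow_card_sub_one_eq_one c hc), pow_one]

namespace ZMod

lemma natCast_ne_zero_of_pos_of_lt {n a : ℕ} (ha : 0 < a) (han : a < n) : (a : ZMod n) ≠ 0 := by
  rw [← val_pos, val_natCast_of_lt han]
  exact ha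

lemma val_mem_Icc {n : ℕ} [NeZero n] {c : ZMod n} (hc : c ≠ 0) : c.val ∈ Icc 1 (n - 1) := by
  have := val_lt c
  have := val_pos.mpr hc
  rw [mem_Icc]
  omega

lemma filter_Icc_natCast_eq {n : ℕ} [NeZero n] {c : ZMod n} (hc : c ≠ 0) :
    (Icc 1 (n - 1)).filter (fun g : ℕ => (g : ZMod n) = c) = {c.val} := by
  ext g
  rw [mem_filter, mem_singleton]
  constructor
  · rintro ⟨hg, rfl⟩
    rw [val_natCast_of_lt (by rw [mem_Icc] at hg; omega)]
  · rintro rfl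
    exact ⟨val_mem_Icc hc, natCast_zmod_val c⟩

variable {p : ℕ} [Fact p.Prime] {e e' : ℕ}

theorem pow_eq_iff_eq_pow (he : e ≠ 0) (hinv : e * e' ≡ 1 [MOD p - 1]) {c : ZMod p} (hc : c ≠ 0)
    (x : ZMod p) : x ^ e = c ↔ x = c ^ e' := by
  rw [← card p] at hinv
  exact FiniteField.pow_eq_iff_eq_pow he hinv hc x

lemma card_filter_pow_eq {s : Finset (ZMod p)} (he : e ≠ 0) (hinv : e * e' ≡ 1 [MOD p - 1])
    {c : ZMod p} (hc : c ≠ 0) (hs : c ^ e' ∈ s) : #{x ∈ s | x ^ e = c} = 1 := by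
  rw [filter_congr fun x _ => pow_eq_iff_eq_pow he hinv hc x, filter_eq', if_pos hs,
    card_singleton]

lemma card_filter_Icc_pow_eq (he : e ≠ 0) (hinv : e * e' ≡ 1 [MOD p - 1]) {c : ZMod p}
    (hc : c ≠ 0) : ((Icc 1 (p - 1)).filter fun g : ℕ => (g : ZMod p) ^ e = c).card = 1 := by
  rw [filter_congr fun (g : ℕ) _ => pow_eq_iff_eq_pow he hinv hc (g : ZMod p),
    filter_Icc_natCast_eq (pow_ne_zero e' hc), card_singleton]

end ZMod

lemma Nat.exists_mul_modEq_one_of_coprime {a n : ℕ} (han : a.Coprime n) (hn : n ≠ 0) :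
    ∃ b, a * b ≡ 1 [MOD n] := by
  obtain ⟨b, -, hb⟩ := Nat.exists_mul_mod_eq_of_coprime 1 han hn
  exact ⟨b, hb⟩

lemma Nat.card_filter_Icc_coprime (n : ℕ) : #{a ∈ Icc 1 n | a.Coprime n} = n.totient := by
  rw [filter_congr fun a _ => Nat.coprime_comm, ← Nat.filter_coprime_Ico_eq_totient n 1, add_comm,
    Ico_add_one_right_eq_Icc]

lemma Finset.card_filter_product_and_right {α β : Type*} (s : Finset α) (t : Finset β)
    (P : α → β → Prop) (Q : β → Prop) [∀ a b, Decidable (P a b)] [DecidablePred Q] :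
    #{x ∈ s ×ˢ t | P x.1 x.2 ∧ Q x.2} = ∑ b ∈ t with Q b, #{a ∈ s | P a b} := by
  rw [card_filter, sum_product_right, sum_filter]
  refine sum_congr rfl fun b _ => ?_
  split_ifs with hb
  · simp only [hb, and_true, card_filter]
  · simp only [hb, and_false, if_false, sum_const_zero]

end

open scoped Classical

theorem stmt_9_general (p h hbar : ℕ) (hp : p.Prime) (h1 : 1 ≤ h) (h2 : h ≤ p - 1)
    (hinv : h * hbar ≡ 1 [MOD p - 1]) :
    (((Finset.Icc 1 (p - 1)).filter fun g => (g : ZMod p) ^ h = (h : ZMod p)).card = 1 ∧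
      ∀ g ∈ Finset.Icc 1 (p - 1), (g : ZMod p) ^ h = (h : ZMod p) →
        (g : ZMod p) = (h : ZMod p) ^ hbar) ∧
    (((Finset.Icc 1 (p - 1)) ×ˢ Finset.Icc 1 (p - 1)).filter fun gh =>
        (gh.1 : ZMod p) ^ gh.2 = (gh.2 : ZMod p) ∧ Nat.gcd gh.2 (p - 1) = 1).card =
      Nat.totient (p - 1) := by
  have := Fact.mk hp
  have hp1 := hp.one_lt
  have hcast {a : ℕ} (ha : a ∈ Finset.Icc 1 (p - 1)) : (a : ZMod p) ≠ 0 := by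
    rw [Finset.mem_Icc] at ha
    exact ZMod.natCast_ne_zero_of_pos_of_lt ha.1 (by omega)
  have hh : h ∈ Finset.Icc 1 (p - 1) := Finset.mem_Icc.mpr ⟨h1, h2⟩
  refine ⟨⟨?_, fun g _ hg => (ZMod.pow_eq_iff_eq_pow (by omega) hinv (hcast hh) g).mp hg⟩, ?_⟩
  · -- here `g : ZMod p`, and `Icc 1 (p - 1)` is coerced to its image under the `Finset` monad
    simp only [Finset.pure_def, Finset.bind_def, Finset.sup_singleton_apply]
    refine ZMod.card_filter_pow_eq (by omega) hinv (hcast hh) ?_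
    simp only [Finset.mem_image]
    exact ⟨_, ZMod.val_mem_Icc (pow_ne_zero _ (hcast hh)), ZMod.natCast_zmod_val _⟩
  rw [Finset.card_filter_product_and_right (P := fun (g a : ℕ) => (g : ZMod p) ^ a = a)
    (Q := fun a : ℕ => a.gcd (p - 1) = 1), ← Nat.card_filter_Icc_coprime, Finset.card_eq_sum_ones]
  refine Finset.sum_congr rfl fun a ha => ?_
  obtain ⟨ha, hcop⟩ := Finset.mem_filter.mp ha
  obtain ⟨b, hb⟩ := Nat.exists_mul_modEq_one_of_coprime hcop (by omega)
  exact ZMod.card_filter_Icc_pow_eq (by rw [Finset.mem_Icc] at ha; omega) hb (hcast ha)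

/-- for `h` with `gcd(h, p-1) = 1`, there is a unique `g ∈ {1,…,p-1}` with
`g^h ≡ h (mod p)`, namely `g ≡ h^h̄ (mod p)` where `h·h̄ ≡ 1 (mod p-1)`; consequently the
number of pairs `(g,h)` with `g^h ≡ h (mod p)` and `gcd(h, p-1) = 1` equals `φ(p-1)`. -/
theorem stmt_9 (p h hbar : ℕ) (hp : p.Prime) (h1 : 1 ≤ h) (h2 : h ≤ p - 1)
    (hg : Nat.gcd h (p - 1) = 1) (hinv : h * hbar ≡ 1 [MOD p - 1]) :
    (((Finset.Icc 1 (p - 1)).filter fun g => (g : ZMod p) ^ h = (h : ZMod p)).card = 1 ∧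
      ∀ g ∈ Finset.Icc 1 (p - 1), (g : ZMod p) ^ h = (h : ZMod p) →
        (g : ZMod p) = (h : ZMod p) ^ hbar) ∧
    (((Finset.Icc 1 (p - 1)) ×ˢ Finset.Icc 1 (p - 1)).filter fun gh =>
        (gh.1 : ZMod p) ^ gh.2 = (gh.2 : ZMod p) ∧ Nat.gcd gh.2 (p - 1) = 1).card =
      Nat.totient (p - 1) :=
  stmt_9_general p h hbar hp h1 h2 hinv
end

section
/- For any positive integer q and any divisor d of q, the following identity holds: Σ_{e,f | q, gcd(e,f)=d} Σ_{m | q} Σ_{n | q/m, gcd(e/d, nm) = n} Σ_{t | q/m, gcd(f/d, tm) = t} φ(nm)·φ(tm)·φ(q/e)·φ(q/f)/φ(m) = q · J₂(q/d), where J₂(r) = Σ_{s | r} s²·μ(r/s) is the Jordan totient function of order 2. -/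
/-!
Put `a = e / d` and `b = f / d`, which are coprime when `gcd e f = d`. The two gcd conditions
on `(m, n, t)` say exactly that `n = gcd(a, ntm)` and `t = gcd(b, ntm)`, so `(m, n, t) ↦ ntm` is a
bijection from the index triples onto the divisors of `q`; as `n` and `t` are coprime,
`φ(nm) φ(tm) / φ(m) = φ(ntm)`, and the triple sum collapses to `∑_{k ∣ q} φ(k) = q`.
What remains is `∑_{a, b ∣ r, (a, b) = 1} φ(r/a) φ(r/b)` with `r = q/d`. Detecting coprimality by
`∑_{k ∣ (a, b)} μ(k)` and using `∑_{k ∣ a ∣ r} φ(r/a) = r/k` turns it into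
`∑_{k ∣ r} μ(k) (r/k)² = J₂(r)`.
-/

open scoped Classical

/-- The Jordan totient function of order 2: `J₂(r) = ∑_{s ∣ r} s²·μ(r/s)`. -/
def J2 (r : ℕ) : ℤ :=
  ∑ s ∈ r.divisors, (s : ℤ) ^ 2 * ArithmeticFunction.moebius (r / s)

open Finset
open scoped Nat ArithmeticFunction.Moebius

namespace Nat

theorem gcd_mul_eq_left_iff {a n m : ℕ} (hn : 0 < n) :
    gcd a (n * m) = n ↔ n ∣ a ∧ Coprime (a / n) m := by
  constructor
  · intro h
    obtain ⟨c, rfl⟩ : n ∣ a := h ▸ gcd_dvd_left _ _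
    rw [gcd_mul_left, Nat.mul_eq_left hn.ne'] at h
    rw [Nat.mul_div_cancel_left _ hn]
    exact ⟨dvd_mul_right n c, h⟩
  · rintro ⟨⟨c, rfl⟩, hc⟩
    rw [Nat.mul_div_cancel_left _ hn] at hc
    rw [gcd_mul_left, hc, mul_one]

theorem Coprime.gcd_mul_eq_left_pair_iff {a b n t m : ℕ} (hab : Coprime a b) (hn : 0 < n)
    (ht : 0 < t) :
    gcd a (n * m) = n ∧ gcd b (t * m) = t ↔ gcd a (n * t * m) = n ∧ gcd b (n * t * m) = t := by
  have ha : gcd a (n * t * m) = n ↔ n ∣ a ∧ Coprime (a / n) (t * m) := by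
    rw [mul_assoc]
    exact gcd_mul_eq_left_iff hn
  have hb : gcd b (n * t * m) = t ↔ t ∣ b ∧ Coprime (b / t) (n * m) := by
    rw [show n * t * m = t * (n * m) by ring]
    exact gcd_mul_eq_left_iff ht
  rw [ha, hb, gcd_mul_eq_left_iff hn, gcd_mul_eq_left_iff ht, coprime_mul_iff_right,
    coprime_mul_iff_right]
  constructor
  · rintro ⟨⟨hna, ham⟩, htb, hbm⟩
    exact ⟨⟨hna, (hab.coprime_dvd_right htb).coprime_dvd_left (div_dvd_of_dvd hna), ham⟩,
      htb, (hab.symm.coprime_dvd_right hna).coprime_dvd_left (div_dvd_of_dvd htb), hbm⟩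
  · rintro ⟨⟨hna, -, ham⟩, htb, -, hbm⟩
    exact ⟨⟨hna, ham⟩, htb, hbm⟩

theorem Coprime.gcd_gcd {a b : ℕ} (hab : Coprime a b) (x y : ℕ) : Coprime (gcd a x) (gcd b y) :=
  (hab.coprime_dvd_left (gcd_dvd_left a x)).coprime_dvd_right (gcd_dvd_left b y)

theorem Coprime.gcd_mul_gcd_dvd {a b : ℕ} (hab : Coprime a b) (k : ℕ) : gcd a k * gcd b k ∣ k :=
  (hab.gcd_gcd k k).mul_dvd_of_dvd_of_dvd (gcd_dvd_right a k) (gcd_dvd_right b k)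

theorem mem_divisors_div_iff {q m n : ℕ} (hq : q ≠ 0) (hm : m ∣ q) :
    n ∈ (q / m).divisors ↔ n * m ∣ q := by
  rw [mem_divisors, Nat.dvd_div_iff_mul_dvd hm, mul_comm, and_iff_left]
  exact Nat.div_ne_zero_iff.2
    ⟨ne_zero_of_dvd_ne_zero hq hm, Nat.le_of_dvd (Nat.pos_of_ne_zero hq) hm⟩

theorem Coprime.totient_mul_mul_totient_mul {n t m : ℕ} (h : Coprime n t) (ht : t ≠ 0)
    (hm : m ≠ 0) : φ (n * m) * φ (t * m) = φ (n * t * m) * φ m := by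
  have hnm := totient_gcd_mul_totient_mul (n * m) t
  have hmt := totient_gcd_mul_totient_mul m t
  rw [h.gcd_mul_left_cancel m, mul_right_comm] at hnm
  rw [mul_comm m] at hmt
  have hpos : 0 < φ (gcd m t) * φ t * gcd m t := by
    have := gcd_pos_of_pos_left t (Nat.pos_of_ne_zero hm)
    have := Nat.pos_of_ne_zero ht
    positivity
  refine Nat.eq_of_mul_eq_mul_right hpos ?_
  linear_combination φ (n * t * m) * φ (gcd m t) * hmt - φ (t * m) * φ (gcd m t) * hnm

theorem sum_divisors_filter_dvd {M : Type*} [AddCommMonoid M] {q d : ℕ} (hq : q ≠ 0)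
    (hd : d ∣ q) (g : ℕ → M) :
    ∑ e ∈ q.divisors with d ∣ e, g e = ∑ a ∈ (q / d).divisors, g (d * a) := by
  have hd0 : 0 < d := Nat.pos_of_ne_zero (ne_zero_of_dvd_ne_zero hq hd)
  symm
  refine sum_nbij' (d * ·) (· / d) ?_ ?_ ?_ ?_ fun _ _ => rfl
  · intro a ha
    rw [mem_divisors_div_iff hq hd] at ha
    exact mem_filter.2 ⟨mem_divisors.2 ⟨mul_comm a d ▸ ha, hq⟩, dvd_mul_right d a⟩
  · intro e he
    obtain ⟨he, hde⟩ := mem_filter.1 he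
    rw [mem_divisors_div_iff hq hd, Nat.div_mul_cancel hde]
    exact dvd_of_mem_divisors he
  · intro a _
    exact Nat.mul_div_cancel_left a hd0
  · intro e he
    exact Nat.mul_div_cancel' (mem_filter.1 he).2

theorem sum_divisors_filter_dvd_totient {r k : ℕ} (hr : r ≠ 0) (hk : k ∣ r) :
    ∑ a ∈ r.divisors with k ∣ a, φ (r / a) = r / k := by
  rw [sum_divisors_filter_dvd hr hk]
  simp_rw [← Nat.div_div_eq_div_mul]
  rw [sum_div_divisors, sum_totient]

theorem sum_divisors_gcd_eq {M : Type*} [AddCommMonoid M] {q d : ℕ} (hq : q ≠ 0) (hd : d ∣ q)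
    (G : ℕ → ℕ → M) :
    ∑ e ∈ q.divisors, ∑ f ∈ q.divisors, (if gcd e f = d then G e f else 0) =
      ∑ a ∈ (q / d).divisors, ∑ b ∈ (q / d).divisors,
        if a.Coprime b then G (d * a) (d * b) else 0 := by
  have hd0 : d ≠ 0 := ne_zero_of_dvd_ne_zero hq hd
  calc _ = ∑ e ∈ q.divisors with d ∣ e, ∑ f ∈ q.divisors with d ∣ f,
        (if gcd e f = d then G e f else 0) := by
        rw [← sum_filter_of_ne (p := (d ∣ ·)) fun e _ he => ?_]
        · refine sum_congr rfl fun e _ => (sum_filter_of_ne fun f _ hf => ?_).symm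
          exact (ite_ne_right_iff.1 hf).1 ▸ gcd_dvd_right e f
        · obtain ⟨f, -, hf⟩ := exists_ne_zero_of_sum_ne_zero he
          exact (ite_ne_right_iff.1 hf).1 ▸ gcd_dvd_left e f
    _ = _ := by simp only [sum_divisors_filter_dvd hq hd, gcd_mul_left, Nat.mul_eq_left hd0]

end Nat

theorem sum_divisors_coprime_eq_sum_moebius {R : Type*} [CommRing R] (r : ℕ) (g h : ℕ → R) :
    ∑ a ∈ r.divisors, ∑ b ∈ r.divisors, (if a.Coprime b then g a * h b else 0) =
      ∑ k ∈ r.divisors, (μ k : R) *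
        ((∑ a ∈ r.divisors with k ∣ a, g a) * ∑ b ∈ r.divisors with k ∣ b, h b) := by
  have coprime_indicator : ∀ a ∈ r.divisors, ∀ b,
      (if a.Coprime b then 1 else 0 : R) = ∑ k ∈ r.divisors with k ∣ a ∧ k ∣ b, (μ k : R) := by
    intro a ha b
    have hgcd : Nat.gcd a b ∣ r := (Nat.gcd_dvd_left a b).trans (Nat.dvd_of_mem_divisors ha)
    rw [filter_congr fun k _ => Nat.dvd_gcd_iff.symm,
      Nat.divisors_filter_dvd_of_dvd (Nat.mem_divisors.1 ha).2 hgcd]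
    have hμζ := congrArg (· (Nat.gcd a b)) (ArithmeticFunction.coe_moebius_mul_coe_zeta (R := R))
    simp only [ArithmeticFunction.coe_mul_zeta_apply, ArithmeticFunction.intCoe_apply,
      ArithmeticFunction.one_apply] at hμζ
    rw [hμζ]
  symm
  calc _ = ∑ k ∈ r.divisors, ∑ a ∈ r.divisors, ∑ b ∈ r.divisors,
        if k ∣ a ∧ k ∣ b then (μ k : R) * (g a * h b) else 0 := by
        refine sum_congr rfl fun k _ => ?_
        rw [sum_filter, sum_filter, sum_mul_sum, mul_sum]
        refine sum_congr rfl fun a _ => ?_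
        rw [mul_sum]
        refine sum_congr rfl fun b _ => ?_
        by_cases ha : k ∣ a <;> by_cases hb : k ∣ b <;> simp [ha, hb]
    _ = ∑ a ∈ r.divisors, ∑ b ∈ r.divisors, ∑ k ∈ r.divisors,
        if k ∣ a ∧ k ∣ b then (μ k : R) * (g a * h b) else 0 := by
        rw [sum_comm]
        exact sum_congr rfl fun a _ => sum_comm
    _ = _ := sum_congr rfl fun a ha => sum_congr rfl fun b _ => by
        rw [← sum_filter, ← sum_mul, ← coprime_indicator a ha b, boole_mul]

theorem sum_divisors_coprime_totient_mul_totient {r : ℕ} (hr : r ≠ 0) :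
    ∑ a ∈ r.divisors, ∑ b ∈ r.divisors,
      (if a.Coprime b then (φ (r / a) * φ (r / b) : ℚ) else 0) = J2 r := by
  rw [sum_divisors_coprime_eq_sum_moebius, J2,
    ← Nat.sum_div_divisors r fun s => (s : ℤ) ^ 2 * μ (r / s), Int.cast_sum]
  refine sum_congr rfl fun k hk => ?_
  have hkr := Nat.dvd_of_mem_divisors hk
  rw [Nat.div_div_self hkr hr, ← Nat.cast_sum, Nat.sum_divisors_filter_dvd_totient hr hkr]
  simp only [Int.cast_mul, Int.cast_pow, Int.cast_natCast]
  ring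

def gcdTriples (a b q : ℕ) : Finset (Σ _ : ℕ, ℕ × ℕ) :=
  q.divisors.sigma fun m =>
    {n ∈ (q / m).divisors | Nat.gcd a (n * m) = n} ×ˢ {t ∈ (q / m).divisors | Nat.gcd b (t * m) = t}

theorem mem_gcdTriples {a b q m n t : ℕ} (hab : a.Coprime b) (hq : q ≠ 0) :
    ⟨m, (n, t)⟩ ∈ gcdTriples a b q ↔
      n * t * m ∣ q ∧ Nat.gcd a (n * t * m) = n ∧ Nat.gcd b (n * t * m) = t := by
  simp only [gcdTriples, mem_sigma, mem_product, mem_filter, Nat.mem_divisors (m := q)]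
  constructor
  · rintro ⟨⟨hm, -⟩, ⟨hn, han⟩, ht, hbt⟩
    have hnt : n.Coprime t := han ▸ hbt ▸ hab.gcd_gcd _ _
    refine ⟨?_, (hab.gcd_mul_eq_left_pair_iff (Nat.pos_of_mem_divisors hn)
      (Nat.pos_of_mem_divisors ht)).1 ⟨han, hbt⟩⟩
    rw [mul_comm]
    exact Nat.mul_dvd_of_dvd_div hm
      (hnt.mul_dvd_of_dvd_of_dvd (Nat.dvd_of_mem_divisors hn) (Nat.dvd_of_mem_divisors ht))
  · rintro ⟨hk, han, hbt⟩
    obtain ⟨⟨hn, ht⟩, -⟩ : (n ≠ 0 ∧ t ≠ 0) ∧ m ≠ 0 := by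
      simpa using ne_zero_of_dvd_ne_zero hq hk
    have hm : m ∣ q := (dvd_mul_left m _).trans hk
    obtain ⟨han', hbt'⟩ := (hab.gcd_mul_eq_left_pair_iff (Nat.pos_of_ne_zero hn)
      (Nat.pos_of_ne_zero ht)).2 ⟨han, hbt⟩
    refine ⟨⟨hm, hq⟩, ⟨?_, han'⟩, ?_, hbt'⟩ <;> rw [Nat.mem_divisors_div_iff hq hm]
    · exact (mul_dvd_mul_right (dvd_mul_right n t) m).trans hk
    · exact (mul_dvd_mul_right (dvd_mul_left t n) m).trans hk

theorem sum_gcdTriples {M : Type*} [AddCommMonoid M] {a b q : ℕ} (hab : a.Coprime b) (hq : q ≠ 0)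
    (g : ℕ → M) : ∑ p ∈ gcdTriples a b q, g (p.2.1 * p.2.2 * p.1) = ∑ k ∈ q.divisors, g k := by
  refine sum_nbij' (fun p => p.2.1 * p.2.2 * p.1)
    (fun k => ⟨k / (Nat.gcd a k * Nat.gcd b k), (Nat.gcd a k, Nat.gcd b k)⟩) ?_ ?_ ?_ ?_
    fun _ _ => rfl
  · rintro ⟨m, n, t⟩ hp
    exact Nat.mem_divisors.2 ⟨((mem_gcdTriples hab hq).1 hp).1, hq⟩
  · intro k hk
    rw [mem_gcdTriples hab hq, Nat.mul_div_cancel' (hab.gcd_mul_gcd_dvd k)]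
    exact ⟨Nat.dvd_of_mem_divisors hk, rfl, rfl⟩
  · rintro ⟨m, n, t⟩ hp
    obtain ⟨hk, han, hbt⟩ := (mem_gcdTriples hab hq).1 hp
    obtain ⟨⟨hn, ht⟩, -⟩ : (n ≠ 0 ∧ t ≠ 0) ∧ m ≠ 0 := by
      simpa using ne_zero_of_dvd_ne_zero hq hk
    simp only [han, hbt, Nat.mul_div_cancel_left _ (Nat.pos_of_ne_zero (mul_ne_zero hn ht))]
  · intro k _
    exact Nat.mul_div_cancel' (hab.gcd_mul_gcd_dvd k)

theorem sum_gcdTriples_totient {a b q : ℕ} (hab : a.Coprime b) (hq : q ≠ 0) :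
    ∑ m ∈ q.divisors, ∑ n ∈ (q / m).divisors with Nat.gcd a (n * m) = n,
      ∑ t ∈ (q / m).divisors with Nat.gcd b (t * m) = t,
        (φ (n * m) * φ (t * m) : ℚ) / φ m = q := by
  calc _ = ∑ p ∈ gcdTriples a b q, (φ (p.2.1 * p.1) * φ (p.2.2 * p.1) : ℚ) / φ p.1 := by
        simp only [gcdTriples, sum_sigma, sum_product]
    _ = ∑ p ∈ gcdTriples a b q, (φ (p.2.1 * p.2.2 * p.1) : ℚ) := by
        refine sum_congr rfl fun ⟨m, n, t⟩ hp => ?_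
        obtain ⟨hk, han, hbt⟩ := (mem_gcdTriples hab hq).1 hp
        obtain ⟨⟨-, ht⟩, hm⟩ : (n ≠ 0 ∧ t ≠ 0) ∧ m ≠ 0 := by
          simpa using ne_zero_of_dvd_ne_zero hq hk
        rw [div_eq_iff (by simpa using hm)]
        exact_mod_cast (han ▸ hbt ▸ hab.gcd_gcd _ _ : n.Coprime t).totient_mul_mul_totient_mul ht hm
    _ = q := by
        rw [sum_gcdTriples hab hq fun k => (φ k : ℚ)]
        exact_mod_cast Nat.sum_totient q

/-- for `d ∣ q`,
`∑_{e,f ∣ q, (e,f)=d} ∑_{m ∣ q} ∑_{n ∣ q/m, (e/d, nm)=n} ∑_{t ∣ q/m, (f/d, tm)=t}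
  φ(nm)φ(tm)φ(q/e)φ(q/f)/φ(m) = q·J₂(q/d)`. -/
theorem stmt_11 (q d : ℕ) (hq : 0 < q) (hd : d ∣ q) :
    (∑ e ∈ q.divisors, ∑ f ∈ q.divisors,
      if Nat.gcd e f = d then
        ∑ m ∈ q.divisors,
          ∑ n ∈ ((q / m).divisors.filter fun n => Nat.gcd (e / d) (n * m) = n),
            ∑ t ∈ ((q / m).divisors.filter fun t => Nat.gcd (f / d) (t * m) = t),
              ((Nat.totient (n * m) : ℚ) * Nat.totient (t * m) *
                Nat.totient (q / e) * Nat.totient (q / f)) / Nat.totient m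
      else 0) = (q : ℚ) * (J2 (q / d) : ℚ) := by
  have hd0 : 0 < d := Nat.pos_of_dvd_of_pos hd hq
  calc _ = (q : ℚ) * ∑ e ∈ q.divisors, ∑ f ∈ q.divisors,
        if Nat.gcd e f = d then (φ (q / e) * φ (q / f) : ℚ) else 0 := by
        simp only [mul_sum, mul_ite, mul_zero]
        refine sum_congr rfl fun e _ => sum_congr rfl fun f _ => ?_
        refine if_ctx_congr Iff.rfl (fun hef => ?_) fun _ => rfl
        have hab : (e / d).Coprime (f / d) := hef ▸ Nat.coprime_div_gcd_div_gcd (hef ▸ hd0)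
        rw [← sum_gcdTriples_totient hab hq.ne']
        simp only [sum_mul, div_mul_eq_mul_div, mul_assoc]
    _ = q * J2 (q / d) := by
        rw [Nat.sum_divisors_gcd_eq hq.ne' hd, ← sum_divisors_coprime_totient_mul_totient
          (Nat.div_pos (Nat.le_of_dvd hq hd) hd0).ne']
        simp only [← Nat.div_div_eq_div_mul]
end

section
/- Let p be prime, b a primitive root mod p, and suppose h, a in {1,...,p-1} satisfy h·log g ≡ log a (mod p-1) and a·log g ≡ log h (mod p-1) for some g (where log denotes the discrete logarithm base b). Let d = gcd(h, a, p-1) and let u₀, v₀ satisfy u₀h + v₀a ≡ d (mod p-1). Then (h/d)·log h ≡ (a/d)·log a (mod p-1) and d·log g ≡ v₀·log h + u₀·log a (mod p-1). -/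
/-- with `b` a primitive root mod `p` and `lg, lh, la` discrete logarithms
(base `b`) of `g, h, a`, if `h·lg ≡ la (mod p-1)` and `a·lg ≡ lh (mod p-1)`, then with
`d = gcd(h, a, p-1)` and Bézout coefficients `u₀h + v₀a ≡ d (mod p-1)` we have
`(h/d)·lh ≡ (a/d)·la (mod p-1)` and `d·lg ≡ v₀·lh + u₀·la (mod p-1)`. -/
theorem stmt_14 (p : ℕ) (hp : p.Prime) (b g h a : ℕ)
    (hb : IsPrimitiveRoot ((b : ZMod p)) (p - 1))
    (hh1 : 1 ≤ h) (hh2 : h ≤ p - 1) (ha1 : 1 ≤ a) (ha2 : a ≤ p - 1)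
    (lg lh la : ℕ)
    (hlg : (b : ZMod p) ^ lg = (g : ZMod p))
    (hlh : (b : ZMod p) ^ lh = (h : ZMod p))
    (hla : (b : ZMod p) ^ la = (a : ZMod p))
    (e1 : h * lg ≡ la [MOD p - 1]) (e2 : a * lg ≡ lh [MOD p - 1])
    (d u0 v0 : ℕ) (hd : d = Nat.gcd h (Nat.gcd a (p - 1)))
    (hbez : u0 * h + v0 * a ≡ d [MOD p - 1]) :
    (h / d) * lh ≡ (a / d) * la [MOD p - 1] ∧
      d * lg ≡ v0 * lh + u0 * la [MOD p - 1] := by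
  have hdh : d ∣ h := hd ▸ Nat.gcd_dvd_left _ _
  have hda : d ∣ a := hd ▸ (Nat.gcd_dvd_right h _).trans (Nat.gcd_dvd_left _ _)
  have hkey : h / d * a = a / d * h := by
    obtain ⟨h', rfl⟩ := hdh
    obtain ⟨a', rfl⟩ := hda
    have hd0 : 0 < d := Nat.pos_of_ne_zero (by rintro rfl; simp at hh1)
    rw [Nat.mul_div_cancel_left _ hd0, Nat.mul_div_cancel_left _ hd0]; ring
  constructor
  · calc h / d * lh ≡ h / d * (a * lg) [MOD p - 1] := (e2.symm).mul_left _
      _ = a / d * (h * lg) := by rw [← mul_assoc, hkey, mul_assoc]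
      _ ≡ a / d * la [MOD p - 1] := e1.mul_left _
  · calc d * lg ≡ (u0 * h + v0 * a) * lg [MOD p - 1] := hbez.symm.mul_right _
      _ = u0 * (h * lg) + v0 * (a * lg) := by ring
      _ ≡ u0 * la + v0 * lh [MOD p - 1] := (e1.mul_left _).add (e2.mul_left _)
      _ = v0 * lh + u0 * la := by ring
end

section
/- Let p be prime and suppose h, a in {1,...,p-1} with gcd(h, a, p-1) = 1 and h^h ≡ a^a (mod p). Then there exists a unique g modulo p with 1 ≤ g ≤ p-1 such that g^h ≡ a (mod p) and g^a ≡ h (mod p). -/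
private lemma bezout3 (h a q : ℕ) (hgcd : Nat.gcd h (Nat.gcd a q) = 1) :
    ∃ u v w : ℤ, (h : ℤ) * u + a * v + q * w = 1 := by
  set d := Nat.gcd a q with hd
  have h1 : ((Nat.gcd h d : ℕ) : ℤ) = h * Nat.gcdA h d + d * Nat.gcdB h d :=
    Nat.gcd_eq_gcd_ab h d
  have h2 : ((d : ℕ) : ℤ) = a * Nat.gcdA a q + q * Nat.gcdB a q :=
    Nat.gcd_eq_gcd_ab a q
  refine ⟨Nat.gcdA h d, Nat.gcdA a q * Nat.gcdB h d, Nat.gcdB a q * Nat.gcdB h d, ?_⟩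
  have h3 : ((1 : ℕ) : ℤ) = h * Nat.gcdA h d + d * Nat.gcdB h d := by rw [← hgcd]; exact h1
  rw [h2] at h3
  push_cast at h3 ⊢
  linarith [h3]

private lemma pow_eq_one_of (p : ℕ) [Fact p.Prime] (t : ZMod p) (ht : t ≠ 0)
    (h a : ℕ) (u v w : ℤ) (huv : (h : ℤ) * u + a * v + (p - 1 : ℕ) * w = 1)
    (h1 : t ^ h = 1) (h2 : t ^ a = 1) : t = 1 := by
  have hq : t ^ (((p - 1 : ℕ) : ℤ)) = 1 := by
    rw [zpow_natCast, ZMod.pow_card_sub_one_eq_one ht]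
  calc t = t ^ (1 : ℤ) := (zpow_one t).symm
    _ = t ^ ((h : ℤ) * u + a * v + (p - 1 : ℕ) * w) := by rw [huv]
    _ = ((t ^ (h : ℤ)) ^ u) * ((t ^ (a : ℤ)) ^ v) * ((t ^ (((p-1:ℕ)) : ℤ)) ^ w) := by
        rw [zpow_add₀ ht, zpow_add₀ ht, ← zpow_mul, ← zpow_mul, ← zpow_mul]
    _ = 1 := by
        rw [zpow_natCast, zpow_natCast, h1, h2, hq, one_zpow, one_zpow, one_zpow,
          mul_one, mul_one]

/-- if `gcd(h, a, p-1) = 1` and `h^h ≡ a^a (mod p)`, then there is a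
unique `g ∈ {1,…,p-1}` with `g^h ≡ a (mod p)` and `g^a ≡ h (mod p)`. -/
theorem stmt_15 (p : ℕ) (hp : p.Prime) (h a : ℕ)
    (hh1 : 1 ≤ h) (hh2 : h ≤ p - 1) (ha1 : 1 ≤ a) (ha2 : a ≤ p - 1)
    (hgcd : Nat.gcd h (Nat.gcd a (p - 1)) = 1)
    (hha : (h : ZMod p) ^ h = (a : ZMod p) ^ a) :
    ∃! g : ℕ, g ∈ Finset.Icc 1 (p - 1) ∧
      (g : ZMod p) ^ h = (a : ZMod p) ∧ (g : ZMod p) ^ a = (h : ZMod p) := by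
  haveI := Fact.mk hp
  have hp1 : 1 < p := hp.one_lt
  have hhp : h < p := by omega
  have hap : a < p := by omega
  have hH0 : (h : ZMod p) ≠ 0 := by
    rw [Ne, ZMod.natCast_eq_zero_iff]
    intro hdvd
    have := Nat.le_of_dvd (by omega) hdvd
    omega
  have hA0 : (a : ZMod p) ≠ 0 := by
    rw [Ne, ZMod.natCast_eq_zero_iff]
    intro hdvd
    have := Nat.le_of_dvd (by omega) hdvd
    omega
  obtain ⟨u, v, w, huv⟩ := bezout3 h a (p - 1) hgcd
  set A : ZMod p := (a : ZMod p) with hAdef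
  set H : ZMod p := (h : ZMod p) with hHdef
  have hAq : A ^ (((p - 1 : ℕ)) : ℤ) = 1 := by
    rw [zpow_natCast, ZMod.pow_card_sub_one_eq_one hA0]
  have hHq : H ^ (((p - 1 : ℕ)) : ℤ) = 1 := by
    rw [zpow_natCast, ZMod.pow_card_sub_one_eq_one hH0]
  set g0 : ZMod p := A ^ u * H ^ v with hg0
  have hg0ne : g0 ≠ 0 := mul_ne_zero (zpow_ne_zero u hA0) (zpow_ne_zero v hH0)
  have key : H ^ (h : ℤ) = A ^ (a : ℤ) := by
    rw [zpow_natCast, zpow_natCast]; exact hha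
  have hg0h : g0 ^ h = A := by
    have hz : g0 ^ (h : ℤ) = A := by
      have hqw : A ^ (((p-1:ℕ):ℤ) * w) = 1 := by rw [zpow_mul, hAq, one_zpow]
      calc g0 ^ (h:ℤ) = A ^ (u*(h:ℤ)) * H ^ (v*(h:ℤ)) := by
            rw [hg0, mul_zpow, ← zpow_mul, ← zpow_mul]
        _ = A ^ (u*(h:ℤ)) * A ^ ((a:ℤ)*v) := by
            rw [mul_comm v (h:ℤ), zpow_mul H (h:ℤ) v, key, ← zpow_mul A (a:ℤ) v]
        _ = A ^ (u*(h:ℤ) + (a:ℤ)*v) := (zpow_add₀ hA0 _ _).symm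
        _ = A ^ (1 - ((p-1:ℕ):ℤ)*w) := by congr 1; linarith
        _ = A := by rw [zpow_sub₀ hA0, zpow_one, hqw, div_one]
    rwa [zpow_natCast] at hz
  have hg0a : g0 ^ a = H := by
    have hz : g0 ^ (a : ℤ) = H := by
      have hqw : H ^ (((p-1:ℕ):ℤ) * w) = 1 := by rw [zpow_mul, hHq, one_zpow]
      calc g0 ^ (a:ℤ) = A ^ (u*(a:ℤ)) * H ^ (v*(a:ℤ)) := by
            rw [hg0, mul_zpow, ← zpow_mul, ← zpow_mul]
        _ = H ^ ((h:ℤ)*u) * H ^ (v*(a:ℤ)) := by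
            rw [mul_comm u (a:ℤ), zpow_mul A (a:ℤ) u, ← key, ← zpow_mul H (h:ℤ) u]
        _ = H ^ ((h:ℤ)*u + v*(a:ℤ)) := (zpow_add₀ hH0 _ _).symm
        _ = H ^ (1 - ((p-1:ℕ):ℤ)*w) := by congr 1; linarith
        _ = H := by rw [zpow_sub₀ hH0, zpow_one, hqw, div_one]
    rwa [zpow_natCast] at hz
  have hcastval : ((g0.val : ℕ) : ZMod p) = g0 := by
    simp [ZMod.natCast_val, ZMod.cast_id]
  refine ⟨g0.val, ⟨?_, ?_, ?_⟩, ?_⟩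
  · rw [Finset.mem_Icc]
    constructor
    · have : g0.val ≠ 0 := by
        rw [Ne, ZMod.val_eq_zero]; exact hg0ne
      omega
    · have := ZMod.val_lt g0
      omega
  · rw [hcastval]; exact hg0h
  · rw [hcastval]; exact hg0a
  · rintro g' ⟨hmem, he1, he2⟩
    rw [Finset.mem_Icc] at hmem
    have hg'lt : g' < p := by omega
    have hg'0 : (g' : ZMod p) ≠ 0 := by
      rw [Ne, ZMod.natCast_eq_zero_iff]
      intro hdvd
      have := Nat.le_of_dvd (by omega) hdvd
      omega
    have heq : (g' : ZMod p) = g0 := by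
      set t : ZMod p := (g' : ZMod p) * g0⁻¹ with htdef
      have htne : t ≠ 0 := mul_ne_zero hg'0 (inv_ne_zero hg0ne)
      have ht1 : t ^ h = 1 := by
        rw [htdef, mul_pow, inv_pow, he1, hg0h, mul_inv_cancel₀ hA0]
      have ht2 : t ^ a = 1 := by
        rw [htdef, mul_pow, inv_pow, he2, hg0a, mul_inv_cancel₀ hH0]
      have := pow_eq_one_of p t htne h a u v w huv ht1 ht2
      rw [htdef] at this
      exact (mul_inv_eq_one₀ hg0ne).mp this
    calc g' = ((g' : ZMod p)).val := (ZMod.val_cast_of_lt hg'lt).symm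
      _ = g0.val := by rw [heq]
end
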